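/- arXiv:1302.2788 — 4 statements merged into one kernel-verified Lean document; each statement's English description precedes it below -/
import Mathlib

section
/- Let G be a graph, P = (X_1,...,X_l) a path decomposition of G, S ⊆ V(G), x ∈ S, and H a connected component of G − S such that every vertex of S has a neighbor in V(H). Then α(x) ≤ β(H) and α(H) ≤ β(x), where α(v) and β(v) denote the minimum and maximum index of a bag containing v, and α(H), β(H) the minimum and maximum index of a bag intersecting V(H). -/
/-- `H` is an `S`-component of `G`: a connected component of `G - S`
(nonempty, disjoint from `S`, connected as an induced subgraph, closed under
adjacency except into `S`) such that every vertex of `S` has a neighbor in `H`. -/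
def IsSComponent {V : Type*} (G : SimpleGraph V) (S H : Set V) : Prop :=
  H.Nonempty ∧ (∀ v ∈ H, v ∉ S) ∧ (G.induce H).Connected ∧
    (∀ u ∈ H, ∀ w : V, G.Adj u w → w ∈ H ∨ w ∈ S) ∧
    (∀ s ∈ S, ∃ u ∈ H, G.Adj s u)

/-- For a path decomposition of `G`, `x ∈ S` and an `S`-component `H`
(here connected, hence an `S`-branch or an `S`-leaf), we have
`α(x) ≤ β(H)` and `α(H) ≤ β(x)`. -/
theorem stmt_3 {V : Type*} [DecidableEq V] (G : SimpleGraph V)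
    (l : ℕ) (X : ℕ → Finset V)
    (hcov : ∀ v : V, ∃ i < l, v ∈ X i)
    (hedge : ∀ u v : V, G.Adj u v → ∃ i < l, u ∈ X i ∧ v ∈ X i)
    (hpd3 : ∀ i j k : ℕ, i ≤ j → j ≤ k → k < l → X i ∩ X k ⊆ X j)
    (S : Set V) (x : V) (hx : x ∈ S)
    (H : Set V) (hH : IsSComponent G S H)
    (ax bx aH bH : ℕ)
    (haxl : ax < l) (hbxl : bx < l) (haHl : aH < l) (hbHl : bH < l)
    (haxmem : x ∈ X ax) (haxmin : ∀ i < l, x ∈ X i → ax ≤ i)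
    (hbxmem : x ∈ X bx) (hbxmax : ∀ i < l, x ∈ X i → i ≤ bx)
    (haHint : ∃ v ∈ X aH, v ∈ H) (haHmin : ∀ i < l, (∃ v ∈ X i, v ∈ H) → aH ≤ i)
    (hbHint : ∃ v ∈ X bH, v ∈ H) (hbHmax : ∀ i < l, (∃ v ∈ X i, v ∈ H) → i ≤ bH) :
    ax ≤ bH ∧ aH ≤ bx := by
  obtain ⟨-, -, -, -, hnb⟩ := hH
  obtain ⟨u, huH, hadj⟩ := hnb x hx
  obtain ⟨i, hil, hxi, hui⟩ := hedge x u hadj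
  exact ⟨le_trans (haxmin i hil hxi) (hbHmax i hil ⟨u, hui, huH⟩),
    le_trans (haHmin i hil ⟨u, hui, huH⟩) (hbxmax i hil hxi)⟩
end

section
/- Let G be a graph, P = (X_1,...,X_l) a path decomposition of G, S ⊆ V(G), x ∈ S, and H an S-component. If α(x) ≤ α(H), then x ∈ X_i for all i with α(x) ≤ i ≤ α(H). -/
/-- For a path decomposition of `G`, `x ∈ S` and an `S`-component `H`:
if `α(x) ≤ α(H)`, then `x ∈ X_i` for all `α(x) ≤ i ≤ α(H)`. -/
theorem stmt_4 {V : Type*} [DecidableEq V] (G : SimpleGraph V)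
    (l : ℕ) (X : ℕ → Finset V)
    (hcov : ∀ v : V, ∃ i < l, v ∈ X i)
    (hedge : ∀ u v : V, G.Adj u v → ∃ i < l, u ∈ X i ∧ v ∈ X i)
    (hpd3 : ∀ i j k : ℕ, i ≤ j → j ≤ k → k < l → X i ∩ X k ⊆ X j)
    (S : Set V) (x : V) (hx : x ∈ S)
    (H : Set V) (hH : IsSComponent G S H)
    (ax aH : ℕ) (haxl : ax < l) (haHl : aH < l)
    (haxmem : x ∈ X ax) (haxmin : ∀ i < l, x ∈ X i → ax ≤ i)
    (haHint : ∃ v ∈ X aH, v ∈ H) (haHmin : ∀ i < l, (∃ v ∈ X i, v ∈ H) → aH ≤ i)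
    (hle : ax ≤ aH) :
    ∀ i : ℕ, ax ≤ i → i ≤ aH → x ∈ X i := by
  obtain ⟨u, hu, hadj⟩ := hH.2.2.2.2 x hx
  obtain ⟨j, hjl, hxj, huj⟩ := hedge x u hadj
  have hj : aH ≤ j := haHmin j hjl ⟨u, huj, hu⟩
  intro i h1 h2
  exact hpd3 ax i j h1 (h2.trans hj) hjl (Finset.mem_inter.mpr ⟨haxmem, hxj⟩)
end

section
/- Let G be a graph with a path decomposition P = (X_1,...,X_l) of width k (that is, every bag has size at most k+1), and let S ⊆ V(G). Let H_1,...,H_c be the S-branches ordered so that α(H_1) ≤ ... ≤ α(H_c), where c > k. Then for every i ≥ k+1 and every x ∈ S, α(H_i) ≥ α(x). -/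
/-- `H` is an `S`-branch of `G`: an `S`-component with at least two vertices. -/
def IsSBranch {V : Type*} (G : SimpleGraph V) (S H : Set V) : Prop :=
  IsSComponent G S H ∧ ∃ u ∈ H, ∃ w ∈ H, u ≠ w

private lemma walk_interval {V : Type*} [DecidableEq V] {G : SimpleGraph V} {l : ℕ} {X : ℕ → Finset V}
    (hedge : ∀ u v : V, G.Adj u v → ∃ i < l, u ∈ X i ∧ v ∈ X i)
    (hpd3 : ∀ i j m : ℕ, i ≤ j → j ≤ m → m < l → X i ∩ X m ⊆ X j)
    {H : Set V} :
    ∀ (u v : ↑H) (_ : (G.induce H).Walk u v) (p q t : ℕ),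
      (u : V) ∈ X p → (v : V) ∈ X q → p ≤ t → t ≤ q → q < l →
      ∃ z ∈ H, z ∈ X t := by
  intro u v w
  induction w with
  | nil =>
      intro p q t hup hvq hpt htq hql
      exact ⟨_, Subtype.prop _, hpd3 p t q hpt htq hql (Finset.mem_inter.mpr ⟨hup, hvq⟩)⟩
  | @cons u u' v h w ih =>
      intro p q t hup hvq hpt htq hql
      have hadj : G.Adj ↑u ↑u' := h
      obtain ⟨r, hrl, hur, hu'r⟩ := hedge _ _ hadj
      by_cases hc : t ≤ r
      · exact ⟨u, u.2, hpd3 p t r hpt hc hrl (Finset.mem_inter.mpr ⟨hup, hur⟩)⟩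
      · exact ih r q t hu'r hvq (le_of_lt (lt_of_not_ge hc)) htq hql

private lemma comp_subset {V : Type*} {G : SimpleGraph V} {S H₁ H₂ : Set V}
    (h1 : IsSComponent G S H₁) (h2 : IsSComponent G S H₂)
    {v : V} (hv1 : v ∈ H₁) (hv2 : v ∈ H₂) : H₁ ⊆ H₂ := by
  obtain ⟨-, hS1, hc1, -, -⟩ := h1
  obtain ⟨-, -, -, hcl2, -⟩ := h2
  intro u hu
  obtain ⟨w⟩ := hc1.preconnected ⟨v, hv1⟩ ⟨u, hu⟩
  have key : ∀ (x y : ↑H₁) (_ : (G.induce H₁).Walk x y), (x : V) ∈ H₂ → (y : V) ∈ H₂ := by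
    intro x y w
    induction w with
    | nil => exact id
    | @cons x x' y h p ih =>
        intro hx
        have hadj : G.Adj ↑x ↑x' := h
        rcases hcl2 _ hx _ hadj with h' | h'
        · exact ih h'
        · exact absurd h' (hS1 _ x'.2)
  exact key _ _ w hv2

/-- Lemma: for a width-`k` path decomposition (0-indexed bags) and `S`-branches
`H_0, …, H_{c-1}` ordered by start time `α`, with `c > k`, every branch with
index `≥ k` (i.e. the (k+1)-st branch onwards) starts no earlier than every
vertex of `S`: `α(H_i) ≥ α(x)`. -/
theorem stmt_5 {V : Type*} [DecidableEq V] (G : SimpleGraph V)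
    (k l : ℕ) (X : ℕ → Finset V)
    (hcov : ∀ v : V, ∃ i < l, v ∈ X i)
    (hedge : ∀ u v : V, G.Adj u v → ∃ i < l, u ∈ X i ∧ v ∈ X i)
    (hpd3 : ∀ i j m : ℕ, i ≤ j → j ≤ m → m < l → X i ∩ X m ⊆ X j)
    (hw : ∀ i < l, (X i).card ≤ k + 1)
    (S : Set V) (c : ℕ) (hck : k < c)
    (H : Fin c → Set V) (hbr : ∀ i, IsSBranch G S (H i))
    (hinj : Function.Injective H)
    (a : Fin c → ℕ) (hal : ∀ i, a i < l)
    (haint : ∀ i, ∃ v ∈ X (a i), v ∈ H i)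
    (hamin : ∀ i, ∀ j < l, (∃ v ∈ X j, v ∈ H i) → a i ≤ j)
    (hmono : ∀ i j : Fin c, i ≤ j → a i ≤ a j)
    (ax : V → ℕ) (haxl : ∀ x ∈ S, ax x < l)
    (haxmem : ∀ x ∈ S, x ∈ X (ax x))
    (haxmin : ∀ x ∈ S, ∀ j < l, x ∈ X j → ax x ≤ j) :
    ∀ i : Fin c, k ≤ (i : ℕ) → ∀ x ∈ S, ax x ≤ a i := by
  intro i hki x hxS
  by_contra hcon
  push_neg at hcon
  have hP : ∀ j : Fin c, ∃ z, z ∈ H j ∧ (j ≤ i → z ∈ X (ax x)) := by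
    intro j
    by_cases hji : j ≤ i
    · obtain ⟨⟨hne, hS0, hconn, hcl, hnbr⟩, -⟩ := hbr j
      obtain ⟨u, huH, hadj⟩ := hnbr x hxS
      obtain ⟨m, hml, hxm, hum⟩ := hedge x u hadj
      obtain ⟨p0, hp0X, hp0H⟩ := haint j
      have h1 : a j ≤ ax x := le_trans (hmono j i hji) (le_of_lt hcon)
      have h2 : ax x ≤ m := haxmin x hxS m hml hxm
      obtain ⟨wlk⟩ := hconn.preconnected ⟨p0, hp0H⟩ ⟨u, huH⟩
      obtain ⟨z, hz, hzX⟩ := walk_interval hedge hpd3 _ _ wlk (a j) m (ax x) hp0X hum h1 h2 hml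
      exact ⟨z, hz, fun _ => hzX⟩
    · obtain ⟨z, hz⟩ := (hbr j).1.1
      exact ⟨z, hz, fun h => absurd h hji⟩
  choose w hwH hwX using hP
  have hinjw : Set.InjOn w ↑(Finset.Iic i) := by
    intro j _ j' _ he
    by_contra hne
    have h12 := comp_subset (hbr j).1 (hbr j').1 (hwH j) (he ▸ hwH j')
    have h21 := comp_subset (hbr j').1 (hbr j).1 (he ▸ hwH j') (hwH j)
    exact hne (hinj (Set.Subset.antisymm h12 h21))
  have hxnot : x ∉ (Finset.Iic i).image w := by
    intro hx
    obtain ⟨j, _, he⟩ := Finset.mem_image.mp hx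
    exact ((hbr j).1.2.1 _ (hwH j)) (he ▸ hxS)
  have hsub : insert x ((Finset.Iic i).image w) ⊆ X (ax x) := by
    intro z hz
    rcases Finset.mem_insert.mp hz with rfl | hz
    · exact haxmem z hxS
    · obtain ⟨j, hj, rfl⟩ := Finset.mem_image.mp hz
      exact hwX j (Finset.mem_Iic.mp hj)
  have hcard := Finset.card_le_card hsub
  rw [Finset.card_insert_of_notMem hxnot, Finset.card_image_of_injOn hinjw,
    Fin.card_Iic] at hcard
  have := hw (ax x) (haxl x hxS)
  omega
end

section
/- Let G be a graph with a path decomposition P of width at most k, and let S ⊆ V(G) be a set with c S-branches where c ≥ 4k + 1. Then there exists an S-branch H with α̂(S) < α(H) ≤ β(H) < β̂(S), where α̂(S) = max_{x∈S} α(x) and β̂(S) = min_{x∈S} β(x). -/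
open Finset

/-- Along a walk in an induced subgraph, if the endpoints lie in bags on either
side of `m`, some vertex of the subgraph lies in bag `m`. -/
lemma walk_bag {V : Type*} [DecidableEq V] {G : SimpleGraph V} {l : ℕ} {X : ℕ → Finset V}
    (hedge : ∀ u v : V, G.Adj u v → ∃ i < l, u ∈ X i ∧ v ∈ X i)
    (hpd3 : ∀ i j m : ℕ, i ≤ j → j ≤ m → m < l → X i ∩ X m ⊆ X j)
    {H : Set V} {m : ℕ} :
    ∀ {u v : ↥H} (_ : (G.induce H).Walk u v) (p q : ℕ), q < l →
      (u : V) ∈ X p → (v : V) ∈ X q → p ≤ m → m ≤ q → ∃ w, w ∈ H ∧ w ∈ X m := by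
  intro u v W
  induction W with
  | @nil u =>
    intro p q hq hup huq hpm hmq
    exact ⟨_, u.2, hpd3 p m q hpm hmq hq (Finset.mem_inter.mpr ⟨hup, huq⟩)⟩
  | @cons u u' v h W ih =>
    intro p q hq hup hvq hpm hmq
    obtain ⟨j, hjl, huj, hu'j⟩ := hedge u.1 u'.1 h
    rcases le_or_gt m j with hmj | hjm
    · exact ⟨_, u.2, hpd3 p m j hpm hmj hjl (Finset.mem_inter.mpr ⟨hup, huj⟩)⟩
    · exact ih j q hq hu'j hvq hjm.le hmq

lemma branch_subset {V : Type*} {G : SimpleGraph V} {S H1 H2 : Set V}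
    (h1 : IsSBranch G S H1) (h2 : IsSBranch G S H2) {v : V}
    (hv1 : v ∈ H1) (hv2 : v ∈ H2) : H1 ⊆ H2 := by
  intro u hu
  obtain ⟨-, hns, hconn, -, -⟩ := h1.1
  obtain ⟨-, -, -, hcl2, -⟩ := h2.1
  suffices haux : ∀ (p q : ↥H1) (_ : (G.induce H1).Walk p q), (p : V) ∈ H2 → (q : V) ∈ H2 by
    obtain ⟨W⟩ := hconn ⟨v, hv1⟩ ⟨u, hu⟩
    exact haux _ _ W hv2
  intro p q W
  induction W with
  | nil => exact id
  | @cons a b c h W ih =>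
    intro hp
    rcases hcl2 a.1 hp b.1 h with hb | hb
    · exact ih hb
    · exact absurd hb (hns b.1 b.2)

lemma branch_disjoint {V : Type*} {G : SimpleGraph V} {S H1 H2 : Set V}
    (h1 : IsSBranch G S H1) (h2 : IsSBranch G S H2) (hne : H1 ≠ H2) {v : V}
    (hv1 : v ∈ H1) : v ∉ H2 := fun hv2 =>
  hne (le_antisymm (branch_subset h1 h2 hv1 hv2) (branch_subset h2 h1 hv2 hv1))

/-- If `G` has a path decomposition of width at most `k` and `S` has `c`
distinct `S`-branches with `c ≥ 4k + 1`, then some `S`-branch `H` satisfies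
`α̂(S) < α(H) ≤ β(H) < β̂(S)`, i.e. `α(x) < α(H)` and `β(H) < β(x)` for every
`x ∈ S`. -/
theorem stmt_18 {V : Type*} [DecidableEq V] (G : SimpleGraph V)
    (k l : ℕ) (X : ℕ → Finset V)
    (hcov : ∀ v : V, ∃ i < l, v ∈ X i)
    (hedge : ∀ u v : V, G.Adj u v → ∃ i < l, u ∈ X i ∧ v ∈ X i)
    (hpd3 : ∀ i j m : ℕ, i ≤ j → j ≤ m → m < l → X i ∩ X m ⊆ X j)
    (hw : ∀ i < l, (X i).card ≤ k + 1)
    (S : Set V) (c : ℕ) (hc : 4 * k + 1 ≤ c)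
    (H : Fin c → Set V) (hbr : ∀ i, IsSBranch G S (H i))
    (hinj : Function.Injective H)
    (a bH : Fin c → ℕ) (hal : ∀ i, a i < l) (hbHl : ∀ i, bH i < l)
    (haint : ∀ i, ∃ v ∈ X (a i), v ∈ H i)
    (hamin : ∀ i, ∀ j < l, (∃ v ∈ X j, v ∈ H i) → a i ≤ j)
    (hbint : ∀ i, ∃ v ∈ X (bH i), v ∈ H i)
    (hbmax : ∀ i, ∀ j < l, (∃ v ∈ X j, v ∈ H i) → j ≤ bH i)
    (ax bx : V → ℕ)
    (haxl : ∀ x ∈ S, ax x < l) (hbxl : ∀ x ∈ S, bx x < l)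
    (haxmem : ∀ x ∈ S, x ∈ X (ax x))
    (haxmin : ∀ x ∈ S, ∀ j < l, x ∈ X j → ax x ≤ j)
    (hbxmem : ∀ x ∈ S, x ∈ X (bx x))
    (hbxmax : ∀ x ∈ S, ∀ j < l, x ∈ X j → j ≤ bx x) :
    ∃ i : Fin c, ∀ x ∈ S, ax x < a i ∧ bH i < bx x := by
  classical
  have hc0 : 0 < c := lt_of_lt_of_le (Nat.succ_pos _) hc
  rcases S.eq_empty_or_nonempty with hS | ⟨x0, hx0⟩
  · exact ⟨⟨0, hc0⟩, by simp [hS]⟩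
  -- maximum of `ax` over `S`
  have hTne : (ax '' S).Nonempty := ⟨ax x0, ⟨x0, hx0, rfl⟩⟩
  have hTbdd : BddAbove (ax '' S) := ⟨l, fun n ⟨x, hx, hxe⟩ => hxe ▸ (haxl x hx).le⟩
  obtain ⟨xA, hxAS, hxA⟩ := Nat.sSup_mem hTne hTbdd
  set mA := sSup (ax '' S) with hmA
  have hub : ∀ x ∈ S, ax x ≤ mA := fun x hx => le_csSup hTbdd ⟨x, hx, rfl⟩
  have hmAl : mA < l := hxA ▸ haxl xA hxAS
  -- minimum of `bx` over `S`
  have hUne : (bx '' S).Nonempty := ⟨bx x0, ⟨x0, hx0, rfl⟩⟩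
  obtain ⟨xB, hxBS, hxB⟩ := Nat.sInf_mem hUne
  set mB := sInf (bx '' S) with hmB
  have hlb : ∀ x ∈ S, mB ≤ bx x := fun x hx => Nat.sInf_le ⟨x, hx, rfl⟩
  have hmBl : mB < l := hxB ▸ hbxl xB hxBS
  -- branches whose first bag is too early meet bag `mA`
  have hkeyA : ∀ i : Fin c, a i ≤ mA → ∃ w, w ∈ H i ∧ w ∈ X mA ∧ w ≠ xA := by
    intro i hi
    obtain ⟨u, huH, hadj⟩ := (hbr i).1.2.2.2.2 xA hxAS
    obtain ⟨j, hjl, hxAj, huj⟩ := hedge xA u hadj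
    have hmAj : mA ≤ j := hxA ▸ haxmin xA hxAS j hjl hxAj
    obtain ⟨v, hvX, hvH⟩ := haint i
    obtain ⟨W⟩ := ((hbr i).1.2.2.1).preconnected ⟨v, hvH⟩ ⟨u, huH⟩
    obtain ⟨w, hwH, hwX⟩ := walk_bag hedge hpd3 W (a i) j hjl hvX huj hi hmAj
    exact ⟨w, hwH, hwX, fun he => (hbr i).1.2.1 w hwH (he ▸ hxAS)⟩
  -- branches whose last bag is too late meet bag `mB`
  have hkeyB : ∀ i : Fin c, mB ≤ bH i → ∃ w, w ∈ H i ∧ w ∈ X mB ∧ w ≠ xB := by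
    intro i hi
    obtain ⟨u, huH, hadj⟩ := (hbr i).1.2.2.2.2 xB hxBS
    obtain ⟨j, hjl, hxBj, huj⟩ := hedge xB u hadj
    have hjmB : j ≤ mB := hxB ▸ hbxmax xB hxBS j hjl hxBj
    obtain ⟨v, hvX, hvH⟩ := hbint i
    obtain ⟨W⟩ := ((hbr i).1.2.2.1).preconnected ⟨u, huH⟩ ⟨v, hvH⟩
    obtain ⟨w, hwH, hwX⟩ := walk_bag hedge hpd3 W j (bH i) (hbHl i) huj hvX hjmB hi
    exact ⟨w, hwH, hwX, fun he => (hbr i).1.2.1 w hwH (he ▸ hxBS)⟩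
  choose fA hfA1 hfA2 hfA3 using hkeyA
  choose fB hfB1 hfB2 hfB3 using hkeyB
  set badA : Finset (Fin c) := Finset.univ.filter (fun i => a i ≤ mA) with hbadA
  set badB : Finset (Fin c) := Finset.univ.filter (fun i => mB ≤ bH i) with hbadB
  have hdisj : ∀ i j : Fin c, i ≠ j → ∀ v, v ∈ H i → v ∉ H j := by
    intro i j hij v hvi
    exact branch_disjoint (hbr i) (hbr j) (fun he => hij (hinj he)) hvi
  have hcardA : badA.card ≤ k := by
    have h1 : badA.card ≤ ((X mA).erase xA).card := by
      refine Finset.card_le_card_of_injOn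
        (fun i => if h : a i ≤ mA then fA i h else xA) (fun i hi => ?_) ?_
      · have hi' : a i ≤ mA := (Finset.mem_filter.mp hi).2
        simp only [dif_pos hi']
        exact Finset.mem_erase.mpr ⟨hfA3 i hi', hfA2 i hi'⟩
      · intro i hi j hj hij
        have hi' : a i ≤ mA := (Finset.mem_filter.mp hi).2
        have hj' : a j ≤ mA := (Finset.mem_filter.mp hj).2
        simp only [dif_pos hi', dif_pos hj'] at hij
        by_contra hne
        exact hdisj i j hne _ (hfA1 i hi') (hij ▸ hfA1 j hj')
    have h2 : ((X mA).erase xA).card = (X mA).card - 1 :=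
      Finset.card_erase_of_mem (hxA ▸ haxmem xA hxAS)
    have h3 : (X mA).card ≤ k + 1 := hw mA hmAl
    omega
  have hcardB : badB.card ≤ k := by
    have h1 : badB.card ≤ ((X mB).erase xB).card := by
      refine Finset.card_le_card_of_injOn
        (fun i => if h : mB ≤ bH i then fB i h else xB) (fun i hi => ?_) ?_
      · have hi' : mB ≤ bH i := (Finset.mem_filter.mp hi).2
        simp only [dif_pos hi']
        exact Finset.mem_erase.mpr ⟨hfB3 i hi', hfB2 i hi'⟩
      · intro i hi j hj hij
        have hi' : mB ≤ bH i := (Finset.mem_filter.mp hi).2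
        have hj' : mB ≤ bH j := (Finset.mem_filter.mp hj).2
        simp only [dif_pos hi', dif_pos hj'] at hij
        by_contra hne
        exact hdisj i j hne _ (hfB1 i hi') (hij ▸ hfB1 j hj')
    have h2 : ((X mB).erase xB).card = (X mB).card - 1 :=
      Finset.card_erase_of_mem (hxB ▸ hbxmem xB hxBS)
    have h3 : (X mB).card ≤ k + 1 := hw mB hmBl
    omega
  have hex : ∃ i : Fin c, i ∉ badA ∪ badB := by
    by_contra hcon
    push_neg at hcon
    have : (Finset.univ : Finset (Fin c)) ⊆ badA ∪ badB := fun i _ => hcon i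
    have hle : c ≤ (badA ∪ badB).card := by
      simpa using Finset.card_le_card this
    have := Finset.card_union_le badA badB
    omega
  obtain ⟨i, hi⟩ := hex
  rw [Finset.mem_union, hbadA, hbadB] at hi
  push_neg at hi
  simp only [Finset.mem_filter, Finset.mem_univ, true_and, not_le] at hi
  exact ⟨i, fun x hx => ⟨lt_of_le_of_lt (hub x hx) hi.1, lt_of_lt_of_le hi.2 (hlb x hx)⟩⟩
end
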